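/- arXiv:2410.06771 — 4 statements merged into one kernel-verified Lean document; each statement's English description precedes it below -/
import Mathlib

section
/- Let (Ω, μ) be a probability space, let Y : Ω → ℝ be measurable, let ε ∈ (0,1), and let N ≥ 1 be a natural number. Then, with respect to the N-fold product measure μ^⊗N on samples (x₁, …, x_N), the probability of the event that μ{ x ∈ Ω : Y(x) > max_{1≤i≤N} Y(x_i) } > ε is at most (1 − ε)^N. (One-sided scenario bound underlying the Monte Carlo reachable-set estimate: the sampled maximum is, with high probability, exceeded only on a set of measure at most ε.) -/
/-!
The set `T` of thresholds `t` with `μ {Y > t} > ε` is a lower set of `ℝ`, and each of its points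
has `μ {Y ≤ t} ≤ 1 - ε`. By inner regularity every compact subset of `T` lies below its own
maximum, so also `μ {Y ∈ T} ≤ 1 - ε`. If the sampled maximum lies in `T`, every sample does,
and independence gives the bound `(1 - ε)^N`.
-/

open MeasureTheory Real

open Set ENNReal

section ExceedanceProbability

variable {Ω α : Type*} [MeasurableSpace Ω] [LinearOrder α]

theorem isLowerSet_setOf_lt_measure_lt (μ : Measure Ω) (Y : Ω → α) (ε : ℝ≥0∞) :
    IsLowerSet {t | ε < μ {x | t < Y x}} :=
  fun _ _ hba ha => ha.trans_le (measure_mono fun _ hx => hba.trans_lt hx)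

variable [MeasurableSpace α] [TopologicalSpace α] [OrderClosedTopology α]

theorem IsLowerSet.measure_le_of_forall_measure_Iic_le [SecondCountableTopology α]
    [OpensMeasurableSpace α] {ν : Measure α} [ν.InnerRegular]
    {T : Set α} (hT : IsLowerSet T) {c : ℝ≥0∞} (h : ∀ t ∈ T, ν (Iic t) ≤ c) : ν T ≤ c := by
  rw [hT.ordConnected.measurableSet.measure_eq_iSup_isCompact ν]
  refine iSup₂_le fun K hKT => iSup_le fun hK => ?_
  rcases K.eq_empty_or_nonempty with rfl | hK_ne
  · simp
  obtain ⟨t, htK, hK_le⟩ := hK.exists_isGreatest hK_ne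
  exact (measure_mono hK_le).trans (h t (hKT htK))

theorem measure_preimage_setOf_lt_measure_lt_le [PolishSpace α] [BorelSpace α]
    (μ : Measure Ω) [IsProbabilityMeasure μ] {Y : Ω → α} (hY : Measurable Y) (ε : ℝ≥0∞) :
    μ (Y ⁻¹' {t | ε < μ {x | t < Y x}}) ≤ 1 - ε := by
  have hT := isLowerSet_setOf_lt_measure_lt μ Y ε
  rw [← Measure.map_apply hY hT.ordConnected.measurableSet]
  refine hT.measure_le_of_forall_measure_Iic_le fun t ht => ?_
  have hIic : Y ⁻¹' Iic t = {x | t < Y x}ᶜ := by ext; simp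
  rw [Measure.map_apply hY measurableSet_Iic, hIic,
    prob_compl_eq_one_sub (measurableSet_lt measurable_const hY)]
  exact tsub_le_tsub_left ht.le 1

end ExceedanceProbability

theorem scenario_one_sided_max_bound_general
    {Ω : Type*} [MeasurableSpace Ω] (μ : Measure Ω) [IsProbabilityMeasure μ]
    (Y : Ω → ℝ) (hY : Measurable Y)
    (ε : ℝ) (hε : ε ∈ Set.Ioo (0 : ℝ) 1) (N : ℕ) :
    Measure.pi (fun _ : Fin N => μ)
      { xs : Fin N → Ω |
        ENNReal.ofReal ε < μ { x : Ω | Y x > ⨆ i : Fin N, Y (xs i) } } ≤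
    ENNReal.ofReal ((1 - ε) ^ N) := by
  set T := {t : ℝ | ENNReal.ofReal ε < μ {x | t < Y x}}
  have hsub : { xs : Fin N → Ω | ENNReal.ofReal ε < μ { x : Ω | Y x > ⨆ i, Y (xs i) } } ⊆
      pi univ fun _ => Y ⁻¹' T := fun xs hxs i _ =>
    isLowerSet_setOf_lt_measure_lt μ Y _
      (le_ciSup (f := fun i => Y (xs i)) (finite_range _).bddAbove i) hxs
  calc _ ≤ Measure.pi (fun _ : Fin N => μ) (pi univ fun _ => Y ⁻¹' T) := measure_mono hsub
    _ = μ (Y ⁻¹' T) ^ N := by simp [Measure.pi_pi]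
    _ ≤ (1 - ENNReal.ofReal ε) ^ N := by
      gcongr
      exact measure_preimage_setOf_lt_measure_lt_le μ hY _
    _ = ENNReal.ofReal ((1 - ε) ^ N) := by
      rw [ofReal_pow (sub_nonneg.2 hε.2.le), ofReal_sub _ hε.1.le, ofReal_one]

/-- One-sided scenario bound: the sampled maximum of a scalar quantity is, with probability
at least `1 - (1-ε)^N` over the i.i.d. samples, exceeded only on a set of measure at most ε. -/
theorem scenario_one_sided_max_bound
    {Ω : Type*} [MeasurableSpace Ω] (μ : Measure Ω) [IsProbabilityMeasure μ]
    (Y : Ω → ℝ) (hY : Measurable Y)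
    (ε : ℝ) (hε : ε ∈ Set.Ioo (0 : ℝ) 1) (N : ℕ) (hN : 1 ≤ N) :
    Measure.pi (fun _ : Fin N => μ)
      { xs : Fin N → Ω |
        ENNReal.ofReal ε < μ { x : Ω | Y x > ⨆ i : Fin N, Y (xs i) } } ≤
    ENNReal.ofReal ((1 - ε) ^ N) :=
  scenario_one_sided_max_bound_general μ Y hY ε hε N
end

section
/- Let (Ω, μ) be a probability space, let Y : Ω → ℝ be measurable, let ε ∈ (0,1), and let N ≥ 1 be a natural number. Then, with respect to the N-fold product measure μ^⊗N on samples (x₁, …, x_N), the probability of the event that μ{ x ∈ Ω : Y(x) ∉ [min_{1≤i≤N} Y(x_i), max_{1≤i≤N} Y(x_i)] } > ε is at most 2·(1 − ε/2)^N. (Two-sided scenario bound: the sampled interval hull of a scalar quantity fails to ε-cover its distribution with probability at most 2(1 − ε/2)^N.) -/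
/-!
Let `q` be a `c`-quantile of `Y`, i.e. `μ {Y < q} ≤ c ≤ μ {Y ≤ q}`. If more than mass `c` lies
below the sample minimum, then every sample point lies strictly above `q`; by independence this
has probability at most `(1 - c)ᴺ`. Applied to `-Y`, the same bound holds above the sample
maximum, and if more than `ε` lies outside the sample range then one of the two tails carries
more than `ε / 2`.
-/

open MeasureTheory Set Filter Topology ENNReal

section DistributionFunction

variable (ν : Measure ℝ) [IsFiniteMeasure ν]

theorem tendsto_measure_Iic_atBot : Tendsto (fun t => ν (Iic t)) atBot (𝓝 0) := by
  have hempty : (⋂ t : ℝ, Iic t) = ∅ := iInter_Iic_eq_empty_iff.2 (by simp [not_bddBelow_univ])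
  have h := tendsto_measure_iInter_atBot (μ := ν)
    (fun _ => measurableSet_Iic.nullMeasurableSet) monotone_Iic ⟨0, measure_ne_top ν _⟩
  rwa [hempty, measure_empty] at h

theorem tendsto_measure_Iic_nhdsGT (a : ℝ) :
    Tendsto (fun t => ν (Iic t)) (𝓝[>] a) (𝓝 (ν (Iic a))) := by
  have hinter : (⋂ r > a, Iic r) = Iic a := by
    ext x
    simpa using ⟨le_of_forall_gt_imp_ge_of_dense, fun hx r hr => hx.trans hr.le⟩
  have h := tendsto_measure_biInter_gt (μ := ν) (s := Iic)
    (fun _ _ => measurableSet_Iic.nullMeasurableSet) (fun _ _ _ => Iic_subset_Iic.2)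
    ⟨a + 1, lt_add_one a, measure_ne_top ν _⟩
  rwa [hinter] at h

theorem exists_measure_Iio_le_le_measure_Iic {c : ℝ≥0∞} (hc0 : 0 < c) (hc : c < ν univ) :
    ∃ q, ν (Iio q) ≤ c ∧ c ≤ ν (Iic q) := by
  set S := {t | c ≤ ν (Iic t)}
  have hS : S.Nonempty := ((tendsto_measure_Iic_atTop ν).eventually_const_le hc).exists
  have hS_bdd : BddBelow S := by
    obtain ⟨b, hb⟩ := eventually_atBot.1 ((tendsto_measure_Iic_atBot ν).eventually_lt_const hc0)
    exact ⟨b, fun t ht => not_lt.1 fun htb => (hb t htb.le).not_ge ht⟩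
  refine ⟨sInf S, ?_, ?_⟩
  · obtain ⟨u, hu_mono, hu_lt, hu_lim⟩ := exists_seq_strictMono_tendsto (sInf S)
    rw [← iUnion_Iic_eq_Iio_of_lt_of_tendsto hu_lt hu_lim,
      Monotone.measure_iUnion fun m n h => Iic_subset_Iic.2 (hu_mono.monotone h)]
    exact iSup_le fun n => (not_le.1 (show u n ∉ S from notMem_of_lt_csInf (hu_lt n) hS_bdd)).le
  · refine ge_of_tendsto (tendsto_measure_Iic_nhdsGT ν _) ?_
    filter_upwards [self_mem_nhdsWithin] with t ht
    obtain ⟨s, hs, hst⟩ := exists_lt_of_csInf_lt hS ht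
    exact hs.trans (measure_mono (Iic_subset_Iic.2 hst.le))

end DistributionFunction

section Sample

variable {Ω : Type*} [MeasurableSpace Ω] (μ : Measure Ω) [IsFiniteMeasure μ] {Y : Ω → ℝ}

theorem measure_setOf_lt_measure_lt_le (hY : Measurable Y) (c : ℝ≥0∞) :
    μ {x | c < μ {y | Y y < Y x}} ≤ μ univ - c := by
  rcases eq_zero_or_pos c with rfl | hc0
  · rw [tsub_zero]
    exact measure_mono (subset_univ _)
  rcases lt_or_ge c (μ univ) with hc | hc
  swap
  · have hempty : {x | c < μ {y | Y y < Y x}} = ∅ := eq_empty_of_forall_notMem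
      fun x (hx : c < _) => (hc.trans_lt hx).not_ge (measure_mono (subset_univ _))
    simp [hempty]
  have hmap : μ.map Y univ = μ univ := by
    rw [Measure.map_apply hY MeasurableSet.univ, preimage_univ]
  obtain ⟨q, hq_Iio, hq_Iic⟩ :=
    exists_measure_Iio_le_le_measure_Iic (μ.map Y) hc0 (hmap ▸ hc)
  rw [Measure.map_apply hY measurableSet_Iio] at hq_Iio
  rw [Measure.map_apply hY measurableSet_Iic] at hq_Iic
  have hsub : {x | c < μ {y | Y y < Y x}} ⊆ (Y ⁻¹' Iic q)ᶜ := fun x hx hxq =>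
    hx.not_ge ((measure_mono fun y (hy : Y y < Y x) => hy.trans_le hxq).trans hq_Iio)
  calc μ {x | c < μ {y | Y y < Y x}} ≤ μ (Y ⁻¹' Iic q)ᶜ := measure_mono hsub
    _ = μ univ - μ (Y ⁻¹' Iic q) := measure_compl (hY measurableSet_Iic) (measure_ne_top μ _)
    _ ≤ μ univ - c := tsub_le_tsub_left hq_Iic _

theorem measure_setOf_lt_measure_gt_le (hY : Measurable Y) (c : ℝ≥0∞) :
    μ {x | c < μ {y | Y x < Y y}} ≤ μ univ - c := by
  simpa using measure_setOf_lt_measure_lt_le μ hY.neg c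

variable {ι : Type*} [Fintype ι]

theorem pi_le_measure_pow_of_subset_pi {s : Set (ι → Ω)} {t : Set Ω}
    (h : s ⊆ univ.pi fun _ => t) :
    Measure.pi (fun _ : ι => μ) s ≤ μ t ^ Fintype.card ι := by
  simpa [Measure.pi_pi] using measure_mono (μ := Measure.pi fun _ : ι => μ) h

theorem pi_setOf_lt_measure_lt_iInf_le (hY : Measurable Y) (c : ℝ≥0∞) :
    Measure.pi (fun _ : ι => μ) {xs | c < μ {x | Y x < ⨅ i, Y (xs i)}} ≤
      (μ univ - c) ^ Fintype.card ι := by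
  refine (pi_le_measure_pow_of_subset_pi μ fun xs hxs i _ => ?_).trans
    (pow_le_pow_left' (measure_setOf_lt_measure_lt_le μ hY c) _)
  exact hxs.trans_le (measure_mono fun y (hy : Y y < ⨅ i, Y (xs i)) =>
    hy.trans_le (ciInf_le (Finite.bddBelow_range _) i))

theorem pi_setOf_lt_measure_iSup_lt_le (hY : Measurable Y) (c : ℝ≥0∞) :
    Measure.pi (fun _ : ι => μ) {xs | c < μ {x | ⨆ i, Y (xs i) < Y x}} ≤
      (μ univ - c) ^ Fintype.card ι := by
  refine (pi_le_measure_pow_of_subset_pi μ fun xs hxs i _ => ?_).trans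
    (pow_le_pow_left' (measure_setOf_lt_measure_gt_le μ hY c) _)
  exact hxs.trans_le (measure_mono fun y (hy : ⨆ i, Y (xs i) < Y y) =>
    (le_ciSup (Finite.bddAbove_range _) i).trans_lt hy)

theorem pi_setOf_lt_measure_notMem_Icc_le (hY : Measurable Y) (c : ℝ≥0∞) :
    Measure.pi (fun _ : ι => μ) {xs | c < μ {x | Y x ∉ Icc (⨅ i, Y (xs i)) (⨆ i, Y (xs i))}} ≤
      2 * (μ univ - c / 2) ^ Fintype.card ι := by
  set m : (ι → Ω) → ℝ := fun xs => ⨅ i, Y (xs i)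
  set M : (ι → Ω) → ℝ := fun xs => ⨆ i, Y (xs i)
  have hsub : {xs | c < μ {x | Y x ∉ Icc (m xs) (M xs)}} ⊆
      {xs | c / 2 < μ {x | Y x < m xs}} ∪ {xs | c / 2 < μ {x | M xs < Y x}} := by
    intro xs (hxs : c < _)
    by_contra! h
    obtain ⟨hlow, hhigh⟩ : μ {x | Y x < m xs} ≤ c / 2 ∧ μ {x | M xs < Y x} ≤ c / 2 := by
      simpa [not_or] using h
    refine hxs.not_ge ?_
    calc μ {x | Y x ∉ Icc (m xs) (M xs)}
        ≤ μ ({x | Y x < m xs} ∪ {x | M xs < Y x}) :=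
          measure_mono fun x (hx : ¬(m xs ≤ Y x ∧ Y x ≤ M xs)) =>
            (not_and_or.1 hx).imp not_le.1 not_le.1
      _ ≤ μ {x | Y x < m xs} + μ {x | M xs < Y x} := measure_union_le _ _
      _ ≤ c / 2 + c / 2 := add_le_add hlow hhigh
      _ = c := ENNReal.add_halves c
  calc _ ≤ _ := measure_mono hsub
    _ ≤ _ := measure_union_le _ _
    _ ≤ (μ univ - c / 2) ^ Fintype.card ι + (μ univ - c / 2) ^ Fintype.card ι :=
      add_le_add (pi_setOf_lt_measure_lt_iInf_le μ hY _) (pi_setOf_lt_measure_iSup_lt_le μ hY _)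
    _ = _ := (two_mul _).symm

end Sample

theorem scenario_two_sided_interval_bound_general
    {Ω : Type*} [MeasurableSpace Ω] (μ : Measure Ω) [IsProbabilityMeasure μ]
    (Y : Ω → ℝ) (hY : Measurable Y)
    (ε : ℝ) (hε : ε ∈ Set.Ioo (0 : ℝ) 1) (N : ℕ) :
    Measure.pi (fun _ : Fin N => μ)
      { xs : Fin N → Ω |
        ENNReal.ofReal ε <
          μ { x : Ω | Y x ∉ Set.Icc (⨅ i : Fin N, Y (xs i)) (⨆ i : Fin N, Y (xs i)) } } ≤
    ENNReal.ofReal (2 * (1 - ε / 2) ^ N) := by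
  obtain ⟨hε0, hε1⟩ := hε
  have hbound : ENNReal.ofReal (2 * (1 - ε / 2) ^ N) = 2 * (1 - ENNReal.ofReal ε / 2) ^ N := by
    rw [ENNReal.ofReal_mul zero_le_two, ENNReal.ofReal_pow (by linarith),
      ENNReal.ofReal_sub _ (by linarith), ENNReal.ofReal_div_of_pos two_pos]
    simp
  simpa [hbound] using pi_setOf_lt_measure_notMem_Icc_le (ι := Fin N) μ hY (ENNReal.ofReal ε)

/-- Two-sided scenario bound: the sampled interval hull of a scalar quantity fails to
ε-cover its distribution with probability at most `2·(1 - ε/2)^N`. -/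
theorem scenario_two_sided_interval_bound
    {Ω : Type*} [MeasurableSpace Ω] (μ : Measure Ω) [IsProbabilityMeasure μ]
    (Y : Ω → ℝ) (hY : Measurable Y)
    (ε : ℝ) (hε : ε ∈ Set.Ioo (0 : ℝ) 1) (N : ℕ) (hN : 1 ≤ N) :
    Measure.pi (fun _ : Fin N => μ)
      { xs : Fin N → Ω |
        ENNReal.ofReal ε <
          μ { x : Ω | Y x ∉ Set.Icc (⨅ i : Fin N, Y (xs i)) (⨆ i : Fin N, Y (xs i)) } } ≤
    ENNReal.ofReal (2 * (1 - ε / 2) ^ N) :=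
  scenario_two_sided_interval_bound_general μ Y hY ε hε N
end

section
/- Let (Ω, μ) be a probability space, let n ≥ 1 be a natural number, let Φ : Ω → ℝⁿ be measurable, let ε ∈ (0,1), and let N ≥ 1 be a natural number. Then, with respect to the N-fold product measure μ^⊗N on samples (x₁, …, x_N), the probability of the event that μ{ x ∈ Ω : Φ(x) ∉ ∏_{j=1}^{n} [min_{1≤i≤N} Φ_j(x_i), max_{1≤i≤N} Φ_j(x_i)] } > ε is at most 2n·(1 − ε/(2n))^N. (Coordinatewise union bound for the sampled interval hull in ℝⁿ: the hull has 2n one-sided faces, each of which fails with probability at most (1 − ε/(2n))^N.) -/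
/-!
A sample misses the lower face `{x | Φ x j < min_i Φ (xs i) j}` with mass more than `δ` only if
every sample point lies strictly above a `δ`-quantile `q` of `Φ · j`, an event of probability at
most `(1 - δ) ^ N` by independence. The upper faces are the lower faces of `-Φ`, and if the
complement of the hull has mass more than `ε = 2n · δ`, one of its `2n` faces has mass more
than `δ`.
-/

open MeasureTheory Set Filter ProbabilityTheory Function
open scoped ENNReal
open ENNReal (ofReal)

theorem StieltjesFunction.exists_leftLim_le_le_self (F : StieltjesFunction ℝ) {δ : ℝ}
    (hbot : ∀ᶠ t in atBot, F t < δ) (htop : ∀ᶠ t in atTop, δ ≤ F t) :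
    ∃ q, leftLim F q ≤ δ ∧ δ ≤ F q := by
  set S := {t | δ ≤ F t}
  have hne : S.Nonempty := htop.exists
  have hbdd : BddBelow S := by
    obtain ⟨a, ha⟩ := eventually_atBot.1 hbot
    exact ⟨a, fun t ht => le_of_not_ge fun hta => (ha t hta).not_ge ht⟩
  refine ⟨sInf S, ?_, ?_⟩
  · refine le_of_tendsto (F.mono.tendsto_leftLim _) ?_
    filter_upwards [self_mem_nhdsWithin] with t ht
    exact (not_le.1 fun h => notMem_of_lt_csInf ht hbdd h).le
  · refine ge_of_tendsto ((F.right_continuous _).mono Ioi_subset_Ici_self) ?_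
    filter_upwards [self_mem_nhdsWithin] with t ht
    obtain ⟨s, hs, hst⟩ := exists_lt_of_csInf_lt hne ht
    exact hs.trans (F.mono hst.le)

theorem ProbabilityTheory.exists_measure_Iio_le_measure_Ioi_le (ν : Measure ℝ)
    [IsProbabilityMeasure ν] {δ : ℝ} (hδ0 : 0 < δ) (hδ1 : δ < 1) :
    ∃ q, ν (Iio q) ≤ ofReal δ ∧ ν (Ioi q) ≤ ofReal (1 - δ) := by
  obtain ⟨q, hleft, hright⟩ := (cdf ν).exists_leftLim_le_le_self
    ((tendsto_cdf_atBot ν).eventually (gt_mem_nhds hδ0))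
    (((tendsto_cdf_atTop ν).eventually (lt_mem_nhds hδ1)).mono fun _ => le_of_lt)
  refine ⟨q, ?_, ?_⟩
  · rw [← measure_cdf ν, (cdf ν).measure_Iio (tendsto_cdf_atBot ν), sub_zero]
    exact ENNReal.ofReal_le_ofReal hleft
  · rw [← measure_cdf ν, (cdf ν).measure_Ioi (tendsto_cdf_atTop ν)]
    exact ENNReal.ofReal_le_ofReal (by linarith)

theorem Real.iInf_neg {ι : Sort*} (f : ι → ℝ) : ⨅ i, -f i = -⨆ i, f i := by
  rw [iInf, iSup, ← Real.sInf_neg, ← Set.image_neg_eq_neg, ← Set.range_comp]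
  rfl

theorem MeasureTheory.exists_lt_measure_of_card_mul_lt_measure_iUnion {Ω ι : Type*}
    [MeasurableSpace Ω] [Fintype ι] {μ : Measure Ω} {s : ι → Set Ω} {δ : ℝ≥0∞}
    (h : Fintype.card ι * δ < μ (⋃ i, s i)) : ∃ i, δ < μ (s i) := by
  by_contra! hle
  refine h.not_ge ((measure_iUnion_fintype_le μ s).trans ?_)
  simpa using Finset.sum_le_sum fun i (_ : i ∈ Finset.univ) => hle i

theorem MeasureTheory.measure_setOf_card_mul_lt_measure_iUnion_le {S Ω ι : Type*}
    [MeasurableSpace S] [MeasurableSpace Ω] [Fintype ι] (P : Measure S) (μ : Measure Ω)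
    (face : S → ι → Set Ω) {δ p : ℝ≥0∞} (h : ∀ k, P {s | δ < μ (face s k)} ≤ p) :
    P {s | Fintype.card ι * δ < μ (⋃ k, face s k)} ≤ Fintype.card ι * p :=
  calc _ ≤ P (⋃ k, {s | δ < μ (face s k)}) :=
        measure_mono fun s hs => mem_iUnion.2 (exists_lt_measure_of_card_mul_lt_measure_iUnion hs)
    _ ≤ ∑ k, P {s | δ < μ (face s k)} := measure_iUnion_fintype_le P _
    _ ≤ ∑ _k : ι, p := Finset.sum_le_sum fun k _ => h k
    _ = Fintype.card ι * p := by simp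

section SampleExtremes

variable {Ω : Type*} [MeasurableSpace Ω] (μ : Measure Ω) [IsProbabilityMeasure μ]
  {g : Ω → ℝ} {δ : ℝ}

theorem measure_pi_setOf_lt_measure_lt_iInf_le (hg : Measurable g) (hδ0 : 0 < δ) (hδ1 : δ < 1)
    (N : ℕ) :
    Measure.pi (fun _ : Fin N => μ)
      {xs | ofReal δ < μ {x | g x < ⨅ i, g (xs i)}} ≤ ofReal ((1 - δ) ^ N) := by
  have := Measure.isProbabilityMeasure_map (μ := μ) hg.aemeasurable
  obtain ⟨q, hlow, hhigh⟩ := exists_measure_Iio_le_measure_Ioi_le (μ.map g) hδ0 hδ1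
  rw [Measure.map_apply hg measurableSet_Iio] at hlow
  rw [Measure.map_apply hg measurableSet_Ioi] at hhigh
  have hsub : {xs : Fin N → Ω | ofReal δ < μ {x | g x < ⨅ i, g (xs i)}} ⊆
      Set.pi univ fun _ => g ⁻¹' Ioi q := by
    intro xs hxs i _
    have hq : q < ⨅ i, g (xs i) := by
      by_contra! h
      exact hxs.not_ge ((measure_mono fun x (hx : g x < _) => hx.trans_le h).trans hlow)
    exact hq.trans_le (ciInf_le (finite_range _).bddBelow i)
  calc _ ≤ Measure.pi (fun _ : Fin N => μ) (Set.pi univ fun _ => g ⁻¹' Ioi q) :=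
        measure_mono hsub
    _ = μ (g ⁻¹' Ioi q) ^ N := by simp [Measure.pi_pi]
    _ ≤ ofReal (1 - δ) ^ N := pow_le_pow_left₀ zero_le hhigh N
    _ = ofReal ((1 - δ) ^ N) := (ENNReal.ofReal_pow (by linarith) N).symm

theorem measure_pi_setOf_lt_measure_iSup_lt_le (hg : Measurable g) (hδ0 : 0 < δ) (hδ1 : δ < 1)
    (N : ℕ) :
    Measure.pi (fun _ : Fin N => μ)
      {xs | ofReal δ < μ {x | ⨆ i, g (xs i) < g x}} ≤ ofReal ((1 - δ) ^ N) := by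
  simpa only [Pi.neg_apply, Real.iInf_neg, neg_lt_neg_iff] using
    measure_pi_setOf_lt_measure_lt_iInf_le μ hg.neg hδ0 hδ1 N

end SampleExtremes

theorem scenario_interval_hull_union_bound_general
    {Ω : Type*} [MeasurableSpace Ω] (μ : Measure Ω) [IsProbabilityMeasure μ]
    (n : ℕ) (hn : 1 ≤ n) (Φ : Ω → (Fin n → ℝ)) (hΦ : Measurable Φ)
    (ε : ℝ) (hε : ε ∈ Set.Ioo (0 : ℝ) 1) (N : ℕ) :
    Measure.pi (fun _ : Fin N => μ)
      { xs : Fin N → Ω |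
        ENNReal.ofReal ε <
          μ { x : Ω | ¬ ∀ j : Fin n,
            Φ x j ∈ Set.Icc (⨅ i : Fin N, Φ (xs i) j) (⨆ i : Fin N, Φ (xs i) j) } } ≤
    ENNReal.ofReal (2 * n * (1 - ε / (2 * n)) ^ N) := by
  obtain ⟨hε0, hε1⟩ := hε
  set δ := ε / (2 * n) with hδ
  have hn_real : (1 : ℝ) ≤ n := by exact_mod_cast hn
  have hδ0 : 0 < δ := by positivity
  have hδ1 : δ < 1 := by rw [div_lt_one (by positivity)]; linarith
  have hcard (t : ℝ) (ht : 0 ≤ t) :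
      (Fintype.card (Fin n ⊕ Fin n) : ℝ≥0∞) * ofReal t = ofReal (2 * n * t) := by
    rw [Fintype.card_sum, Fintype.card_fin, ← ENNReal.ofReal_natCast,
      ← ENNReal.ofReal_mul (by positivity), Nat.cast_add, ← two_mul]
  let face (xs : Fin N → Ω) : Fin n ⊕ Fin n → Set Ω :=
    Sum.elim (fun j => {x | Φ x j < ⨅ i, Φ (xs i) j})
      (fun j => {x | ⨆ i, Φ (xs i) j < Φ x j})
  have hbad (xs : Fin N → Ω) :
      {x | ¬ ∀ j, Φ x j ∈ Icc (⨅ i, Φ (xs i) j) (⨆ i, Φ (xs i) j)} =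
        ⋃ k, face xs k := by
    ext x
    simp only [mem_ofPred_eq, not_forall, mem_Icc, not_and_or, not_le, exists_or, mem_iUnion,
      Sum.exists, face, Sum.elim_inl, Sum.elim_inr]
  have hεδ : ε = 2 * n * δ := by rw [hδ]; field_simp
  rw [hεδ, ← hcard δ hδ0.le, ← hcard _ (pow_nonneg (by linarith) N)]
  simp_rw [hbad]
  refine measure_setOf_card_mul_lt_measure_iUnion_le _ μ face fun k => ?_
  rcases k with j | j
  · exact measure_pi_setOf_lt_measure_lt_iInf_le μ hΦ.eval hδ0 hδ1 N
  · exact measure_pi_setOf_lt_measure_iSup_lt_le μ hΦ.eval hδ0 hδ1 N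

/-- Coordinatewise union bound for the sampled interval hull in ℝⁿ: the hull has 2n
one-sided faces, each of which fails with probability at most `(1 - ε/(2n))^N`. -/
theorem scenario_interval_hull_union_bound
    {Ω : Type*} [MeasurableSpace Ω] (μ : Measure Ω) [IsProbabilityMeasure μ]
    (n : ℕ) (hn : 1 ≤ n) (Φ : Ω → (Fin n → ℝ)) (hΦ : Measurable Φ)
    (ε : ℝ) (hε : ε ∈ Set.Ioo (0 : ℝ) 1) (N : ℕ) (hN : 1 ≤ N) :
    Measure.pi (fun _ : Fin N => μ)
      { xs : Fin N → Ω |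
        ENNReal.ofReal ε <
          μ { x : Ω | ¬ ∀ j : Fin n,
            Φ x j ∈ Set.Icc (⨅ i : Fin N, Φ (xs i) j) (⨆ i : Fin N, Φ (xs i) j) } } ≤
    ENNReal.ofReal (2 * n * (1 - ε / (2 * n)) ^ N) :=
  scenario_interval_hull_union_bound_general μ n hn Φ hΦ ε hε N
end

section
/- Let d ≥ 1 be a natural number, let ε, ω ∈ (0,1), and let N be a natural number satisfying N ≥ (1/ε)·(e/(e−1))·(log(1/ω) + d). Then the binomial tail satisfies ∑_{i=0}^{d−1} (N choose i) · ε^i · (1 − ε)^{N−i} ≤ ω. (Sample-complexity inequality behind the scenario-approach bound of Theorem 1: the explicit sample size N forces the probability that fewer than d of N independent ε-Bernoulli trials succeed to be at most ω.) -/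
open Real Finset

/-!
Exponential tilting (a Chernoff bound): for `t ≥ 1` every term with `i < d` is at most `t ^ d`
times the corresponding term of the binomial expansion of `(ε / t + (1 - ε)) ^ N`, and
`ε / t + (1 - ε) ≤ exp (-ε (1 - 1 / t))`. With `t = e` the bound becomes
`exp (d - N ε (e - 1) / e)`, and the hypothesis on `N` makes the exponent at most `log ω`.
-/

theorem sum_range_choose_mul_pow_le_add_pow {R : Type*} [CommSemiring R] [PartialOrder R]
    [IsOrderedRing R] {x y : R} (hx : 0 ≤ x) (hy : 0 ≤ y) (N d : ℕ) :
    ∑ i ∈ range d, (N.choose i : R) * x ^ i * y ^ (N - i) ≤ (x + y) ^ N := by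
  have hnonneg : ∀ i, 0 ≤ (N.choose i : R) * x ^ i * y ^ (N - i) := fun i => by positivity
  calc ∑ i ∈ range d, (N.choose i : R) * x ^ i * y ^ (N - i)
      ≤ ∑ i ∈ range (max d (N + 1)), (N.choose i : R) * x ^ i * y ^ (N - i) :=
        sum_le_sum_of_subset_of_nonneg (range_subset_range.mpr (le_max_left _ _))
          fun i _ _ => hnonneg i
    _ = ∑ i ∈ range (N + 1), (N.choose i : R) * x ^ i * y ^ (N - i) := by
        refine (sum_subset (range_subset_range.mpr (le_max_right _ _)) fun i _ hi => ?_).symm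
        rw [Nat.choose_eq_zero_of_lt (by simpa using hi), Nat.cast_zero, zero_mul, zero_mul]
    _ = (x + y) ^ N := by
        rw [add_pow]
        exact sum_congr rfl fun i _ => by ring

theorem binomial_lower_tail_le_tilted {ε t : ℝ} (hε : ε ∈ Set.Icc (0 : ℝ) 1) (ht : 1 ≤ t)
    (N d : ℕ) :
    ∑ i ∈ range d, (N.choose i : ℝ) * ε ^ i * (1 - ε) ^ (N - i)
      ≤ t ^ d * (ε / t + (1 - ε)) ^ N := by
  obtain ⟨hε0, hε1⟩ := hε
  have ht0 : 0 < t := zero_lt_one.trans_le ht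
  calc ∑ i ∈ range d, (N.choose i : ℝ) * ε ^ i * (1 - ε) ^ (N - i)
      = ∑ i ∈ range d, t ^ i * ((N.choose i : ℝ) * (ε / t) ^ i * (1 - ε) ^ (N - i)) := by
        refine sum_congr rfl fun i _ => ?_
        rw [div_pow]
        field_simp
    _ ≤ ∑ i ∈ range d, t ^ d * ((N.choose i : ℝ) * (ε / t) ^ i * (1 - ε) ^ (N - i)) := by
        refine sum_le_sum fun i hi => ?_
        have : t ^ i ≤ t ^ d := pow_le_pow_right₀ ht (mem_range.mp hi).le
        gcongr
    _ ≤ t ^ d * (ε / t + (1 - ε)) ^ N := by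
        rw [← mul_sum]
        gcongr
        exact sum_range_choose_mul_pow_le_add_pow (by positivity) (by linarith) N d

theorem div_add_one_sub_pow_le_exp_neg {ε t : ℝ} (hε0 : 0 ≤ ε) (hε1 : ε ≤ 1) (ht : 0 < t)
    (N : ℕ) :
    (ε / t + (1 - ε)) ^ N ≤ exp (-(N * ε * (1 - 1 / t))) := by
  calc (ε / t + (1 - ε)) ^ N ≤ exp (-(ε * (1 - 1 / t))) ^ N := by
        gcongr
        exact le_of_eq_of_le (by ring) (one_sub_le_exp_neg _)
    _ = exp (-(N * ε * (1 - 1 / t))) := by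
        rw [← exp_nat_mul]
        congr 1
        ring

theorem scenario_binomial_tail_bound_general
    (d : ℕ) (ε ω : ℝ) (hε : ε ∈ Set.Ioo (0 : ℝ) 1)
    (hω : ω ∈ Set.Ioo (0 : ℝ) 1) (N : ℕ)
    (hN : (N : ℝ) ≥ (1 / ε) * (Real.exp 1 / (Real.exp 1 - 1)) * (Real.log (1 / ω) + d)) :
    ∑ i ∈ Finset.range d, (N.choose i : ℝ) * ε ^ i * (1 - ε) ^ (N - i) ≤ ω := by
  obtain ⟨hε0, hε1⟩ := hε
  have he : 1 < exp 1 := one_lt_exp_iff.mpr one_pos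
  have hexponent : d - N * ε * (1 - 1 / exp 1) ≤ log ω := by
    have hscale : 0 < ε * (1 - 1 / exp 1) := by
      have : 1 / exp 1 < 1 := (div_lt_one (by positivity)).mpr he
      exact mul_pos hε0 (sub_pos.mpr this)
    have hN' : log (1 / ω) + d ≤ N * (ε * (1 - 1 / exp 1)) := by
      refine (div_le_iff₀ hscale).mp (le_of_eq_of_le ?_ hN)
      have : exp 1 - 1 ≠ 0 := by linarith
      field_simp
    rw [one_div, log_inv] at hN'
    linarith
  calc ∑ i ∈ range d, (N.choose i : ℝ) * ε ^ i * (1 - ε) ^ (N - i)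
      ≤ exp 1 ^ d * (ε / exp 1 + (1 - ε)) ^ N :=
        binomial_lower_tail_le_tilted ⟨hε0.le, hε1.le⟩ he.le N d
    _ ≤ exp d * exp (-(N * ε * (1 - 1 / exp 1))) := by
        rw [← exp_nat_mul, mul_one]
        gcongr
        exact div_add_one_sub_pow_le_exp_neg hε0.le hε1.le (by positivity) N
    _ ≤ ω := by
        rw [← exp_add, ← exp_log hω.1]
        exact exp_le_exp.mpr (by linarith)

/-- Sample-complexity inequality behind the scenario-approach bound: the explicit sample
size `N` forces the Binomial(N, ε) lower tail `P(X ≤ d - 1)` to be at most `ω`. -/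
theorem scenario_binomial_tail_bound
    (d : ℕ) (hd : 1 ≤ d) (ε ω : ℝ) (hε : ε ∈ Set.Ioo (0 : ℝ) 1)
    (hω : ω ∈ Set.Ioo (0 : ℝ) 1) (N : ℕ)
    (hN : (N : ℝ) ≥ (1 / ε) * (Real.exp 1 / (Real.exp 1 - 1)) * (Real.log (1 / ω) + d)) :
    ∑ i ∈ Finset.range d, (N.choose i : ℝ) * ε ^ i * (1 - ε) ^ (N - i) ≤ ω :=
  scenario_binomial_tail_bound_general d ε ω hε hω N hN
end
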